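/- For every ε > 0 there exists a finite metric voting instance (D, p, p) in which the candidate distribution equals the voter distribution and the expected distortion satisfies Social(D, p, p) ≥ 3/2 − ε. Hence the worst-case expected distortion over all metric instances with identical candidate and voter distributions is at least 3/2. -/

import Mathlib

open Finset

/-- A finite metric space on `n` points. -/
structure FinMetric (n : ℕ) where
  d : Fin n → Fin n → ℝ
  refl : ∀ i, d i i = 0
  symm : ∀ i j, d i j = d j i
  pos : ∀ i j, i ≠ j → 0 < d i j
  triangle : ∀ i j k, d i k ≤ d i j + d j k

/-- Social cost of candidate `i`: average distance to the voters,
distributed according to `q`. -/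
noncomputable def mcost {n : ℕ} (M : FinMetric n) (q : Fin n → ℝ) (i : Fin n) : ℝ :=
  ∑ j, q j * M.d i j

/-- Total voter mass strictly preferring candidate `i` over candidate `i'`. -/
noncomputable def mvotes {n : ℕ} (M : FinMetric n) (q : Fin n → ℝ) (i i' : Fin n) : ℝ :=
  ∑ j ∈ Finset.univ.filter (fun j => M.d i j < M.d i' j), q j

/-- The majority winner of the election between candidates `i` and `i'`. -/
noncomputable def mwin {n : ℕ} (M : FinMetric n) (q : Fin n → ℝ) (i i' : Fin n) : Fin n :=
  if 1/2 < mvotes M q i i' then i else i'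

/-- The socially better of the two candidates `i`, `i'`. -/
noncomputable def mopt {n : ℕ} (M : FinMetric n) (q : Fin n → ℝ) (i i' : Fin n) : Fin n :=
  if mcost M q i < mcost M q i' then i else i'

/-- Pairwise distortion of the election between `i` and `i'`. -/
noncomputable def mr {n : ℕ} (M : FinMetric n) (q : Fin n → ℝ) (i i' : Fin n) : ℝ :=
  mcost M q (mwin M q i i') / mcost M q (mopt M q i i')

/-- Expected distortion: two candidates drawn i.i.d. from `p`, voters distributed as `q`. -/
noncomputable def msocial {n : ℕ} (M : FinMetric n) (p q : Fin n → ℝ) : ℝ :=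
  ∑ i, ∑ i', p i * p i' * mr M q i i'

/-- General position: no voter is equidistant from two distinct candidates, every
election has a strict majority winner, and there are no ties in social cost. -/
def MGenPos {n : ℕ} (M : FinMetric n) (q : Fin n → ℝ) : Prop :=
  (∀ j i i' : Fin n, i ≠ i' → M.d i j ≠ M.d i' j) ∧
  (∀ i i' : Fin n, i ≠ i' → mvotes M q i i' ≠ 1/2) ∧
  (∀ i i' : Fin n, i ≠ i' → mcost M q i ≠ mcost M q i')

-- auxiliary construction
noncomputable def Dfun (m : ℕ) : Fin (m+1) → Fin (m+1) → ℝ :=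
  fun i j => if i = j then 0 else if i = 0 ∨ j = 0 then 1 else 1 - 1/(m:ℝ)

noncomputable def Mm (m : ℕ) (hm : 2 ≤ m) : FinMetric (m+1) where
  d := Dfun m
  refl := by intro i; simp [Dfun]
  symm := by
    intro i j
    unfold Dfun
    rcases eq_or_ne i j with h | h
    · simp [h]
    · rw [if_neg h, if_neg h.symm]
      by_cases h0 : i = 0 ∨ j = 0
      · rw [if_pos h0, if_pos (Or.symm h0)]
      · rw [if_neg h0, if_neg (fun hc => h0 (Or.symm hc))]
  pos := by
    intro i j hij
    have hM : (2:ℝ) ≤ (m:ℝ) := by exact_mod_cast hm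
    have h1 : 1/(m:ℝ) ≤ 1/2 := by
      apply one_div_le_one_div_of_le <;> linarith
    unfold Dfun
    rw [if_neg hij]
    split
    · norm_num
    · linarith
  triangle := by
    intro i j k
    have hM : (2:ℝ) ≤ (m:ℝ) := by exact_mod_cast hm
    have h1 : 1/(m:ℝ) ≤ 1/2 := by
      apply one_div_le_one_div_of_le <;> linarith
    have h0 : (0:ℝ) < 1/(m:ℝ) := by positivity
    have hnn : ∀ a b : Fin (m+1), 0 ≤ Dfun m a b := by
      intro a b; unfold Dfun
      split
      · exact le_refl 0
      · split
        · norm_num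
        · linarith
    have hub : ∀ a b : Fin (m+1), Dfun m a b ≤ 1 := by
      intro a b; unfold Dfun
      split
      · norm_num
      · split
        · exact le_refl 1
        · linarith
    have hlb : ∀ a b : Fin (m+1), a ≠ b → 1 - 1/(m:ℝ) ≤ Dfun m a b := by
      intro a b hab; unfold Dfun
      rw [if_neg hab]
      split
      · linarith
      · exact le_refl _
    have hrefl : ∀ a : Fin (m+1), Dfun m a a = 0 := by intro a; simp [Dfun]
    have hsymm : ∀ a b : Fin (m+1), Dfun m a b = Dfun m b a := by
      intro a b
      unfold Dfun
      rcases eq_or_ne a b with h | h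
      · simp [h]
      · rw [if_neg h, if_neg h.symm]
        by_cases h0 : a = 0 ∨ b = 0
        · rw [if_pos h0, if_pos (Or.symm h0)]
        · rw [if_neg h0, if_neg (fun hc => h0 (Or.symm hc))]
    rcases eq_or_ne j i with hji | hji
    · rw [hji, hrefl, zero_add]
    · rcases eq_or_ne j k with hjk | hjk
      · rw [hjk, hrefl, add_zero, hsymm]
      · have l1 := hlb i j (Ne.symm hji)
        have l2 := hlb j k hjk
        have := hub i k
        linarith

noncomputable def Pm (m : ℕ) : Fin (m+1) → ℝ :=
  fun i => if i = 0 then (1 - 1/(m:ℝ))/2 else (1 + 1/(m:ℝ))/(2*m)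

lemma Pm_succ (m : ℕ) (i : Fin m) : Pm m i.succ = (1 + 1/(m:ℝ))/(2*m) := by
  simp [Pm, Fin.succ_ne_zero i]

lemma mcost_zero (m : ℕ) (hm : 2 ≤ m) :
    mcost (Mm m hm) (Pm m) 0 = (1 + 1/(m:ℝ))/2 := by
  have hM : (2:ℝ) ≤ (m:ℝ) := by exact_mod_cast hm
  unfold mcost
  rw [Fin.sum_univ_succ]
  have h1 : ∀ j : Fin m, Pm m j.succ * (Mm m hm).d 0 j.succ = (1 + 1/(m:ℝ))/(2*m) := by
    intro j
    have hne : (0 : Fin (m+1)) ≠ j.succ := (Fin.succ_ne_zero j).symm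
    simp [Mm, Pm, Dfun, hne, Fin.succ_ne_zero j]
  rw [Finset.sum_congr rfl (fun j _ => h1 j)]
  have h2 : (Mm m hm).d 0 0 = 0 := by simp [Mm, Dfun]
  rw [h2]
  rw [Finset.sum_const, Finset.card_univ, Fintype.card_fin]
  have hm0 : (m:ℝ) ≠ 0 := by linarith
  field_simp
  have hmi : (m:ℝ) * (m:ℝ)⁻¹ = 1 := mul_inv_cancel₀ hm0
  linear_combination ((m:ℝ) * (m:ℝ)⁻¹ + 1 + (m:ℝ) * ((m:ℝ) * (m:ℝ)⁻¹ + 1)) * hmi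

lemma mcost_succ (m : ℕ) (hm : 2 ≤ m) (i : Fin m) :
    mcost (Mm m hm) (Pm m) i.succ
      = (1 - 1/(m:ℝ))/2 + ((m:ℝ)-1) * ((1 + 1/(m:ℝ))/(2*m)) * (1 - 1/(m:ℝ)) := by
  have hM : (2:ℝ) ≤ (m:ℝ) := by exact_mod_cast hm
  unfold mcost
  rw [Fin.sum_univ_succ]
  have h2 : Pm m 0 * (Mm m hm).d i.succ 0 = (1 - 1/(m:ℝ))/2 := by
    simp [Mm, Pm, Dfun, Fin.succ_ne_zero i]
  have h1 : ∀ j : Fin m, Pm m j.succ * (Mm m hm).d i.succ j.succ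
      = (if i = j then 0 else (1 + 1/(m:ℝ))/(2*m) * (1 - 1/(m:ℝ))) := by
    intro j
    rcases eq_or_ne i j with h | h
    · simp [h, Mm, Dfun]
    · have : i.succ ≠ j.succ := by simpa using h
      simp [Mm, Pm, Dfun, h, this, Fin.succ_ne_zero]
  rw [Finset.sum_congr rfl (fun j _ => h1 j), h2]
  have h3 : ∀ j : Fin m, (if i = j then (0:ℝ) else (1 + 1/(m:ℝ))/(2*m) * (1 - 1/(m:ℝ)))
      = (1 + 1/(m:ℝ))/(2*m) * (1 - 1/(m:ℝ)) - (if i = j then (1 + 1/(m:ℝ))/(2*m) * (1 - 1/(m:ℝ)) else 0) := by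
    intro j; split <;> ring
  rw [Finset.sum_congr rfl (fun j _ => h3 j), Finset.sum_sub_distrib,
    Finset.sum_ite_eq, if_pos (Finset.mem_univ i),
    Finset.sum_const, Finset.card_univ, Fintype.card_fin]
  push_cast
  ring

lemma mvotes_succ_zero (m : ℕ) (hm : 2 ≤ m) (i : Fin m) :
    mvotes (Mm m hm) (Pm m) i.succ 0 = (1 + 1/(m:ℝ))/2 := by
  have hM : (2:ℝ) ≤ (m:ℝ) := by exact_mod_cast hm
  have h0 : (0:ℝ) < 1/(m:ℝ) := by positivity
  unfold mvotes
  rw [Finset.sum_filter, Fin.sum_univ_succ]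
  have h2 : (if (Mm m hm).d i.succ 0 < (Mm m hm).d 0 0 then Pm m 0 else 0) = 0 := by
    rw [if_neg]
    simp [Mm, Dfun, Fin.succ_ne_zero i]
  have h1 : ∀ j : Fin m, (if (Mm m hm).d i.succ j.succ < (Mm m hm).d 0 j.succ then Pm m j.succ else 0)
      = (1 + 1/(m:ℝ))/(2*m) := by
    intro j
    rw [if_pos, Pm_succ]
    have hd0 : (Mm m hm).d 0 j.succ = 1 := by
      simp [Mm, Dfun, (Fin.succ_ne_zero j).symm]
    rw [hd0]
    rcases eq_or_ne i j with h | h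
    · simp [h, Mm, Dfun]
    · have hne : i.succ ≠ j.succ := by simpa using h
      simp [Mm, Dfun, hne, Fin.succ_ne_zero]
      linarith
  rw [h2, Finset.sum_congr rfl (fun j _ => h1 j), Finset.sum_const,
    Finset.card_univ, Fintype.card_fin, zero_add]
  have hm0 : (m:ℝ) ≠ 0 := by linarith
  field_simp
  have hmi : (m:ℝ) * (m:ℝ)⁻¹ = 1 := mul_inv_cancel₀ hm0
  linear_combination ((m:ℝ) * (m:ℝ)⁻¹ + 1 + (m:ℝ) * ((m:ℝ) * (m:ℝ)⁻¹ + 1)) * hmi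

lemma mvotes_zero_succ (m : ℕ) (hm : 2 ≤ m) (i : Fin m) :
    mvotes (Mm m hm) (Pm m) 0 i.succ = (1 - 1/(m:ℝ))/2 := by
  have hM : (2:ℝ) ≤ (m:ℝ) := by exact_mod_cast hm
  have h0 : (0:ℝ) < 1/(m:ℝ) := by positivity
  unfold mvotes
  rw [Finset.sum_filter, Fin.sum_univ_succ]
  have h2 : (if (Mm m hm).d 0 0 < (Mm m hm).d i.succ 0 then Pm m 0 else 0) = (1 - 1/(m:ℝ))/2 := by
    rw [if_pos, Pm]
    · simp
    · simp [Mm, Dfun, Fin.succ_ne_zero i]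
  have h1 : ∀ j : Fin m, (if (Mm m hm).d 0 j.succ < (Mm m hm).d i.succ j.succ then Pm m j.succ else 0)
      = 0 := by
    intro j
    rw [if_neg]
    have hd0 : (Mm m hm).d 0 j.succ = 1 := by
      simp [Mm, Dfun, (Fin.succ_ne_zero j).symm]
    rw [hd0]
    rcases eq_or_ne i j with h | h
    · simp [h, Mm, Dfun]
    · have hne : i.succ ≠ j.succ := by simpa using h
      simp [Mm, Dfun, hne, Fin.succ_ne_zero]
  rw [h2, Finset.sum_congr rfl (fun j _ => h1 j), Finset.sum_const]
  simp

lemma mwin_or {n : ℕ} (M : FinMetric n) (q : Fin n → ℝ) (i i' : Fin n) :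
    mwin M q i i' = i ∨ mwin M q i i' = i' := by
  unfold mwin; split; exacts [Or.inl rfl, Or.inr rfl]

lemma mopt_or {n : ℕ} (M : FinMetric n) (q : Fin n → ℝ) (i i' : Fin n) :
    mopt M q i i' = i ∨ mopt M q i i' = i' := by
  unfold mopt; split; exacts [Or.inl rfl, Or.inr rfl]

lemma c0_pos (m : ℕ) (hm : 2 ≤ m) : (0:ℝ) < (1 + 1/(m:ℝ))/2 := by
  have hM : (2:ℝ) ≤ (m:ℝ) := by exact_mod_cast hm
  have h0 : (0:ℝ) < 1/(m:ℝ) := by positivity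
  linarith

lemma cb_pos (m : ℕ) (hm : 2 ≤ m) :
    (0:ℝ) < (1 - 1/(m:ℝ))/2 + ((m:ℝ)-1) * ((1 + 1/(m:ℝ))/(2*m)) * (1 - 1/(m:ℝ)) := by
  have hM : (2:ℝ) ≤ (m:ℝ) := by exact_mod_cast hm
  have h1 : 1/(m:ℝ) ≤ 1/2 := by apply one_div_le_one_div_of_le <;> linarith
  have h0 : (0:ℝ) < 1/(m:ℝ) := by positivity
  have : (0:ℝ) ≤ ((m:ℝ)-1) * ((1 + 1/(m:ℝ))/(2*m)) * (1 - 1/(m:ℝ)) := by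
    apply mul_nonneg
    apply mul_nonneg
    · linarith
    · positivity
    · linarith
  linarith

lemma c0_lt_cb (m : ℕ) (hm4 : 4 ≤ m) :
    (1 + 1/(m:ℝ))/2 < (1 - 1/(m:ℝ))/2 + ((m:ℝ)-1) * ((1 + 1/(m:ℝ))/(2*m)) * (1 - 1/(m:ℝ)) := by
  have hM : (4:ℝ) ≤ (m:ℝ) := by exact_mod_cast hm4
  have hMpos : (0:ℝ) < (m:ℝ) := by linarith
  have hm0 : (m:ℝ) ≠ 0 := by linarith
  rw [div_lt_iff₀ (by norm_num : (0:ℝ) < 2)] at *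
  have key : ((m:ℝ)^3 - 3*(m:ℝ)^2 - (m:ℝ) + 1) > 0 := by nlinarith [sq_nonneg ((m:ℝ) - 3)]
  have expand : (1 - 1/(m:ℝ))/2 + ((m:ℝ)-1) * ((1 + 1/(m:ℝ))/(2*m)) * (1 - 1/(m:ℝ))
      - (1 + 1/(m:ℝ))/2 = ((m:ℝ)^3 - 3*(m:ℝ)^2 - (m:ℝ) + 1) / (2*(m:ℝ)^3) := by
    field_simp
    ring
  have hden : (0:ℝ) < 2*(m:ℝ)^3 := by positivity
  nlinarith [div_pos key hden]

lemma mr_zero_succ (m : ℕ) (hm : 2 ≤ m) (hm4 : 4 ≤ m) (i : Fin m) :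
    mr (Mm m hm) (Pm m) 0 i.succ
      = ((1 - 1/(m:ℝ))/2 + ((m:ℝ)-1) * ((1 + 1/(m:ℝ))/(2*m)) * (1 - 1/(m:ℝ))) / ((1 + 1/(m:ℝ))/2) := by
  have hM : (2:ℝ) ≤ (m:ℝ) := by exact_mod_cast hm
  have h0 : (0:ℝ) < 1/(m:ℝ) := by positivity
  unfold mr mwin mopt
  rw [mvotes_zero_succ m hm i, mcost_zero m hm, mcost_succ m hm i,
    if_neg (by linarith), if_pos (c0_lt_cb m hm4), mcost_succ m hm i, mcost_zero m hm]

lemma mr_succ_zero (m : ℕ) (hm : 2 ≤ m) (hm4 : 4 ≤ m) (i : Fin m) :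
    mr (Mm m hm) (Pm m) i.succ 0
      = ((1 - 1/(m:ℝ))/2 + ((m:ℝ)-1) * ((1 + 1/(m:ℝ))/(2*m)) * (1 - 1/(m:ℝ))) / ((1 + 1/(m:ℝ))/2) := by
  have hM : (2:ℝ) ≤ (m:ℝ) := by exact_mod_cast hm
  have h0 : (0:ℝ) < 1/(m:ℝ) := by positivity
  unfold mr mwin mopt
  rw [mvotes_succ_zero m hm i, mcost_zero m hm, mcost_succ m hm i,
    if_pos (by linarith), if_neg (not_lt.2 (le_of_lt (c0_lt_cb m hm4))),
    mcost_succ m hm i, mcost_zero m hm]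

lemma mr_succ_succ (m : ℕ) (hm : 2 ≤ m) (i i' : Fin m) :
    mr (Mm m hm) (Pm m) i.succ i'.succ = 1 := by
  unfold mr
  have hw : mcost (Mm m hm) (Pm m) (mwin (Mm m hm) (Pm m) i.succ i'.succ)
      = (1 - 1/(m:ℝ))/2 + ((m:ℝ)-1) * ((1 + 1/(m:ℝ))/(2*m)) * (1 - 1/(m:ℝ)) := by
    rcases mwin_or (Mm m hm) (Pm m) i.succ i'.succ with h | h <;>
      rw [h, mcost_succ]
  have ho : mcost (Mm m hm) (Pm m) (mopt (Mm m hm) (Pm m) i.succ i'.succ)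
      = (1 - 1/(m:ℝ))/2 + ((m:ℝ)-1) * ((1 + 1/(m:ℝ))/(2*m)) * (1 - 1/(m:ℝ)) := by
    rcases mopt_or (Mm m hm) (Pm m) i.succ i'.succ with h | h <;>
      rw [h, mcost_succ]
  rw [hw, ho, div_self (ne_of_gt (cb_pos m hm))]

lemma mr_zero_zero (m : ℕ) (hm : 2 ≤ m) :
    mr (Mm m hm) (Pm m) 0 0 = 1 := by
  unfold mr
  have hw : mcost (Mm m hm) (Pm m) (mwin (Mm m hm) (Pm m) 0 0) = (1 + 1/(m:ℝ))/2 := by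
    rcases mwin_or (Mm m hm) (Pm m) 0 0 with h | h <;> rw [h, mcost_zero]
  have ho : mcost (Mm m hm) (Pm m) (mopt (Mm m hm) (Pm m) 0 0) = (1 + 1/(m:ℝ))/2 := by
    rcases mopt_or (Mm m hm) (Pm m) 0 0 with h | h <;> rw [h, mcost_zero]
  rw [hw, ho, div_self (ne_of_gt (c0_pos m hm))]

lemma msocial_eq (m : ℕ) (hm : 2 ≤ m) (hm4 : 4 ≤ m) :
    msocial (Mm m hm) (Pm m) (Pm m)
      = ((1 - 1/(m:ℝ))/2)^2
        + 2 * ((1 - 1/(m:ℝ))/2)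
            * ((1 - 1/(m:ℝ))/2 + ((m:ℝ)-1) * ((1 + 1/(m:ℝ))/(2*m)) * (1 - 1/(m:ℝ)))
        + ((1 + 1/(m:ℝ))/2)^2 := by
  have hM : (2:ℝ) ≤ (m:ℝ) := by exact_mod_cast hm
  have hm0 : (m:ℝ) ≠ 0 := by linarith
  set A := (1 - 1/(m:ℝ))/2 with hA
  set B := (1 + 1/(m:ℝ))/(2*(m:ℝ)) with hB
  set C0 := (1 + 1/(m:ℝ))/2 with hC0
  set CB := (1 - 1/(m:ℝ))/2 + ((m:ℝ)-1) * ((1 + 1/(m:ℝ))/(2*(m:ℝ))) * (1 - 1/(m:ℝ)) with hCB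
  have hP0 : Pm m 0 = A := if_pos rfl
  have hmB : (m:ℝ) * B = C0 := by rw [hB, hC0]; field_simp
  have hC0ne : C0 ≠ 0 := ne_of_gt (c0_pos m hm)
  unfold msocial
  rw [Fin.sum_univ_succ]
  have hrow0 : ∑ i' : Fin (m+1), Pm m 0 * Pm m i' * mr (Mm m hm) (Pm m) 0 i'
      = A * A + (m:ℝ) * (A * B * (CB / C0)) := by
    have hterm : ∀ i' : Fin m, Pm m 0 * Pm m i'.succ * mr (Mm m hm) (Pm m) 0 i'.succ
        = A * B * (CB / C0) := by
      intro i'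
      rw [hP0, Pm_succ, mr_zero_succ m hm hm4 i']
    rw [Fin.sum_univ_succ, Finset.sum_congr rfl (fun i' _ => hterm i'),
      mr_zero_zero m hm, hP0, Finset.sum_const,
      Finset.card_univ, Fintype.card_fin, nsmul_eq_mul, mul_one]
  have hrow : ∀ i : Fin m, ∑ i' : Fin (m+1), Pm m i.succ * Pm m i' * mr (Mm m hm) (Pm m) i.succ i'
      = B * A * (CB / C0) + (m:ℝ) * (B * B) := by
    intro i
    have hterm : ∀ i' : Fin m, Pm m i.succ * Pm m i'.succ * mr (Mm m hm) (Pm m) i.succ i'.succ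
        = B * B := by
      intro i'
      rw [Pm_succ, Pm_succ, mr_succ_succ m hm i i', mul_one]
    rw [Fin.sum_univ_succ, Finset.sum_congr rfl (fun i' _ => hterm i'),
      mr_succ_zero m hm hm4 i, hP0, Pm_succ, Finset.sum_const,
      Finset.card_univ, Fintype.card_fin, nsmul_eq_mul]
  rw [hrow0, Finset.sum_congr rfl (fun i _ => hrow i), Finset.sum_const,
    Finset.card_univ, Fintype.card_fin, nsmul_eq_mul]
  have hdiv : (m:ℝ) * (A * B * (CB / C0)) = A * CB := by
    calc (m:ℝ) * (A * B * (CB / C0)) = A * ((m:ℝ) * B) * (CB / C0) := by ring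
      _ = A * C0 * (CB / C0) := by rw [hmB]
      _ = A * CB := by rw [mul_assoc, mul_div_cancel₀ _ hC0ne]  -- A * (C0 * (CB/C0))
  have hdiv2 : (m:ℝ) * (B * A * (CB / C0) + (m:ℝ) * (B * B)) = A * CB + C0^2 := by
    have h1 : (m:ℝ) * (B * A * (CB / C0)) = A * CB := by
      calc (m:ℝ) * (B * A * (CB / C0)) = A * ((m:ℝ) * B) * (CB / C0) := by ring
        _ = A * C0 * (CB / C0) := by rw [hmB]
        _ = A * CB := by rw [mul_assoc, mul_div_cancel₀ _ hC0ne]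
    have h2 : (m:ℝ) * ((m:ℝ) * (B * B)) = C0^2 := by
      calc (m:ℝ) * ((m:ℝ) * (B * B)) = ((m:ℝ) * B) * ((m:ℝ) * B) := by ring
        _ = C0 * C0 := by rw [hmB]
        _ = C0^2 := by ring
    calc (m:ℝ) * (B * A * (CB / C0) + (m:ℝ) * (B * B))
        = (m:ℝ) * (B * A * (CB / C0)) + (m:ℝ) * ((m:ℝ) * (B * B)) := by ring
      _ = A * CB + C0^2 := by rw [h1, h2]
  rw [hdiv, hdiv2]
  ring

lemma Pm_nonneg (m : ℕ) (hm : 2 ≤ m) (i : Fin (m+1)) : 0 ≤ Pm m i := by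
  have hM : (2:ℝ) ≤ (m:ℝ) := by exact_mod_cast hm
  have h1 : 1/(m:ℝ) ≤ 1/2 := by apply one_div_le_one_div_of_le <;> linarith
  have h0 : (0:ℝ) < 1/(m:ℝ) := by positivity
  unfold Pm
  split
  · linarith
  · positivity

lemma Pm_sum (m : ℕ) (hm : 2 ≤ m) : ∑ i, Pm m i = 1 := by
  have hM : (2:ℝ) ≤ (m:ℝ) := by exact_mod_cast hm
  have hm0 : (m:ℝ) ≠ 0 := by linarith
  rw [Fin.sum_univ_succ]
  have hP0 : Pm m 0 = (1 - 1/(m:ℝ))/2 := if_pos rfl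
  rw [Finset.sum_congr rfl (fun i _ => Pm_succ m i), hP0, Finset.sum_const,
    Finset.card_univ, Fintype.card_fin, nsmul_eq_mul]
  field_simp
  ring


/-- for every `ε > 0` there is a finite metric voting instance whose
candidate distribution equals its voter distribution and whose expected distortion
is at least `3/2 - ε`; hence the worst-case expected distortion with identical
candidate and voter distributions is at least `3/2`. -/
theorem metric_identical_distortion_lower_bound (ε : ℝ) (hε : 0 < ε) :
    ∃ (n : ℕ) (M : FinMetric n) (p : Fin n → ℝ),
      (∀ i, 0 ≤ p i) ∧ (∑ i, p i = 1) ∧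
      3/2 - ε ≤ msocial M p p := by
  set m : ℕ := max 4 ⌈2/ε⌉₊ with hmdef
  have hm4 : 4 ≤ m := le_max_left _ _
  have hm : 2 ≤ m := le_trans (by norm_num) hm4
  have hM4 : (4:ℝ) ≤ (m:ℝ) := by exact_mod_cast hm4
  have hMε : 2 ≤ (m:ℝ) * ε := by
    have h1 : (2/ε : ℝ) ≤ (⌈2/ε⌉₊ : ℝ) := Nat.le_ceil _
    have h2 : ((⌈2/ε⌉₊ : ℕ) : ℝ) ≤ (m:ℝ) := by exact_mod_cast le_max_right 4 ⌈2/ε⌉₊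
    have h3 : (2/ε : ℝ) ≤ (m:ℝ) := le_trans h1 h2
    calc (2:ℝ) = (2/ε) * ε := by field_simp
      _ ≤ (m:ℝ) * ε := by apply mul_le_mul_of_nonneg_right h3 (le_of_lt hε)
  refine ⟨m+1, Mm m hm, Pm m, Pm_nonneg m hm, Pm_sum m hm, ?_⟩
  rw [msocial_eq m hm hm4]
  have hm0 : (m:ℝ) ≠ 0 := by linarith
  have key : ((1 - 1/(m:ℝ))/2)^2
        + 2 * ((1 - 1/(m:ℝ))/2)
            * ((1 - 1/(m:ℝ))/2 + ((m:ℝ)-1) * ((1 + 1/(m:ℝ))/(2*m)) * (1 - 1/(m:ℝ)))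
        + ((1 + 1/(m:ℝ))/2)^2
      = 3/2 - (4*(m:ℝ)^3 - 2*(m:ℝ)^2 - 2*(m:ℝ) + 1) / (2*(m:ℝ)^4) := by
    field_simp
    ring
  rw [key]
  have hbound : (4*(m:ℝ)^3 - 2*(m:ℝ)^2 - 2*(m:ℝ) + 1) / (2*(m:ℝ)^4) ≤ 2/(m:ℝ) := by
    rw [div_le_div_iff₀ (by positivity) (by linarith)]
    nlinarith
  have h2m : 2/(m:ℝ) ≤ ε := by
    rw [div_le_iff₀ (by linarith)]
    linarith [hMε]
  linarith
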